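/- arXiv:1807.06312 — 4 statements merged into one kernel-verified Lean document; each statement's English description precedes it below -/
import Mathlib

section
/- The matrix A(n, α, β) defined by A_{uv} = ∑_{i=max{0,v-u}}^{min{v-1,n-u}} C(v-1,i)(1-β)^{v-1-i} β^i C(n-v, u-v+i) α^{u-v+i} (1-α)^{n-u-i} is invertible if and only if α + β ≠ 1. -/
open Finset

/-- Entry `A_{u+1, v+1}` (0-indexed) of the degree-distribution transition matrix:
the probability that a vertex of true degree `v` in an `n`-node network is observed
with degree `u`, when present links are deleted with probability `β` and absent
links are added with probability `α`. -/
noncomputable def Aent (n : ℕ) (α β : ℝ) (u v : ℕ) : ℝ :=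
  ∑ i ∈ Finset.Icc (v - u) (min v (n - 1 - u)),
    (v.choose i : ℝ) * (1 - β) ^ (v - i) * β ^ i *
      ((n - 1 - v).choose (i + u - v) : ℝ) * α ^ (i + u - v) * (1 - α) ^ (n - 1 - u - i)

/-- The `n × n` transition matrix `A(n, α, β)`. -/
noncomputable def Amat (n : ℕ) (α β : ℝ) : Matrix (Fin n) (Fin n) ℝ :=
  fun u v => Aent n α β u v

/-!
The `v`-th column of `A` has generating function `∑ᵤ A_{uv} xᵘ = (β + (1 - β) x)ᵛ (α x + 1 - α)ⁿ⁻¹⁻ᵛ`,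
so multiplying `A` on the left by the Vandermonde matrix of nodes `x_j` gives the projective
Vandermonde matrix of the points `(β + (1 - β) x_j, α x_j + 1 - α)`. Its determinant is the product
over `i < j` of the `2 × 2` minors of these points, each equal to `(1 - α - β) (x_j - x_i)`.
Hence `det A = (1 - α - β) ^ (n choose 2)`.
-/

open Matrix

theorem Fin.sum_card_Ioi (n : ℕ) : ∑ i : Fin n, #(Ioi i) = n.choose 2 := by
  simp only [Fin.card_Ioi]
  rw [Fin.sum_univ_eq_sum_range (fun i => n - 1 - i), sum_range_reflect (fun i => i) n,
    sum_range_id, Nat.choose_two_right]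

theorem sum_pow_mul_Aent {n v : ℕ} (hv : v < n) (α β x : ℝ) :
    ∑ u ∈ range n, x ^ u * Aent n α β u v =
      (β + (1 - β) * x) ^ v * (α * x + (1 - α)) ^ (n - 1 - v) := by
  rw [add_pow, add_pow, sum_mul_sum]
  simp only [Aent, mul_sum]
  rw [sum_sigma', ← sum_product']
  refine sum_nbij' (fun p => (p.2, p.2 + p.1 - v)) (fun q => ⟨v - q.1 + q.2, q.1⟩)
    ?_ ?_ ?_ ?_ ?_
  · rintro ⟨u, i⟩ hp
    simp only [mem_sigma, mem_range, mem_Icc, le_min_iff] at hp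
    simp only [mem_product, mem_range]
    omega
  · rintro ⟨i, k⟩ hq
    simp only [mem_product, mem_range] at hq
    simp only [mem_sigma, mem_range, mem_Icc, le_min_iff]
    omega
  · rintro ⟨u, i⟩ hp
    simp only [mem_sigma, mem_range, mem_Icc, le_min_iff] at hp
    simp only [Sigma.mk.injEq, heq_eq_eq, and_true]
    omega
  · rintro ⟨i, k⟩ hq
    simp only [mem_product, mem_range] at hq
    simp only [Prod.mk.injEq, true_and]
    omega
  · rintro ⟨u, i⟩ hp
    simp only [mem_sigma, mem_range, mem_Icc, le_min_iff] at hp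
    have hk : n - 1 - v - (i + u - v) = n - 1 - u - i := by omega
    have hu : x ^ u = x ^ (v - i) * x ^ (i + u - v) := by rw [← pow_add]; congr 1; omega
    rw [hk, hu, mul_pow, mul_pow]
    ring

theorem vandermonde_mul_Amat (n : ℕ) (α β : ℝ) (x : Fin n → ℝ) :
    vandermonde x * Amat n α β =
      projVandermonde (fun j => β + (1 - β) * x j) (fun j => α * x j + (1 - α)) := by
  ext j v
  rw [mul_apply, projVandermonde_apply, Fin.val_rev]
  simp only [vandermonde_apply, Amat]
  rw [Fin.sum_univ_eq_sum_range (fun u => x j ^ u * Aent n α β u v), sum_pow_mul_Aent v.isLt]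
  congr 2
  omega

theorem det_Amat (n : ℕ) (α β : ℝ) : (Amat n α β).det = (1 - α - β) ^ n.choose 2 := by
  let x : Fin n → ℝ := fun j => j
  have hx : (vandermonde x).det ≠ 0 :=
    det_vandermonde_ne_zero_iff.2 (Nat.cast_injective.comp Fin.val_injective)
  refine mul_left_cancel₀ hx ?_
  rw [← det_mul, vandermonde_mul_Amat, det_projVandermonde, det_vandermonde, ← Fin.sum_card_Ioi,
    ← prod_pow_eq_pow_sum, ← prod_mul_distrib]
  refine prod_congr rfl fun i _ => ?_
  rw [← prod_const, ← prod_mul_distrib]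
  exact prod_congr rfl fun j _ => by ring

theorem Amat_invertible_iff_general (n : ℕ) (hn : 2 ≤ n) (α β : ℝ) :
    IsUnit (Amat n α β) ↔ α + β ≠ 1 := by
  rw [isUnit_iff_isUnit_det, isUnit_iff_ne_zero, det_Amat,
    pow_ne_zero_iff (Nat.choose_pos hn).ne', sub_sub, sub_ne_zero, ne_comm]

theorem Amat_invertible_iff (n : ℕ) (hn : 2 ≤ n) (α β : ℝ)
    (hα : α ∈ Set.Icc (0 : ℝ) 1) (hβ : β ∈ Set.Icc (0 : ℝ) 1) :
    IsUnit (Amat n α β) ↔ α + β ≠ 1 :=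
  Amat_invertible_iff_general n hn α β
end

section
/- For β = 1 and α ∉ {0,1}, A(n, α, 1) has entries A_{uv} = C(n-v, u-1) α^{u-1} (1-α)^{n-u-v+1} when u ≤ n-v+1 and 0 when u > n-v+1; consequently det A(n,α,1) = (-α)^{n(n-1)/2}. -/
open Finset

/-! For `β = 1` the factor `(1 - β) ^ (v - i)` kills every term of `Aent` except `i = v`, so
`A(n, α, 1)` vanishes strictly below the anti-diagonal and carries `α ^ u` on it. Reversing the
order of the columns turns it into an upper triangular matrix with diagonal `α ^ u`, whose
determinant is `α ^ (n(n-1)/2)`, and the reversal has sign `(-1) ^ (n(n-1)/2)`, since it is a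
rotation of `Fin (n + 1)` composed with the reversal of `Fin n`. -/

open Equiv Matrix

lemma finRotate_mul_revPerm (n : ℕ) :
    finRotate (n + 1) * (Fin.revPerm : Perm (Fin (n + 1))) =
      Perm.decomposeFin.symm (0, (Fin.revPerm : Perm (Fin n))) := by
  ext i
  refine Fin.cases ?_ (fun x => ?_) i
  · simp [Fin.rev_zero]
  · simp only [Perm.mul_apply, Fin.revPerm_apply, Fin.rev_succ,
      Perm.decomposeFin_symm_apply_succ, swap_self, Equiv.refl_apply]
    simp [Fin.val_rev]

lemma sign_revPerm : ∀ n : ℕ,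
    Perm.sign (Fin.revPerm : Perm (Fin n)) = (-1) ^ (n * (n - 1) / 2)
  | 0 => by decide
  | n + 1 => by
    have hrev : (Fin.revPerm : Perm (Fin (n + 1))) =
        (finRotate (n + 1))⁻¹ * Perm.decomposeFin.symm (0, (Fin.revPerm : Perm (Fin n))) := by
      rw [← finRotate_mul_revPerm]; group
    rw [hrev, map_mul, map_inv, sign_finRotate, Perm.decomposeFin.symm_sign,
      sign_revPerm n, Nat.triangle_succ]
    simp [pow_add, mul_comm]

theorem Matrix.det_of_eq_zero_below_antidiagonal {R : Type*} [CommRing R] {n : ℕ}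
    (M : Matrix (Fin n) (Fin n) R) (h : ∀ u v : Fin n, u.rev < v → M u v = 0) :
    M.det = (-1) ^ (n * (n - 1) / 2) * ∏ i, M i i.rev := by
  set ε : R := ((Perm.sign (Fin.revPerm : Perm (Fin n)) : ℤ) : R)
  have hε : ε = (-1) ^ (n * (n - 1) / 2) := by simp [ε, sign_revPerm]
  have hεε : ε * ε = 1 := by
    rw [← Int.cast_mul, ← Units.val_mul, Int.units_mul_self, Units.val_one, Int.cast_one]
  have htri : (M.submatrix id Fin.revPerm).BlockTriangular id :=
    fun u v hvu => h u _ (Fin.rev_lt_rev.mpr hvu)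
  calc M.det = ε * (ε * M.det) := by rw [← mul_assoc, hεε, one_mul]
    _ = ε * ∏ i, M i i.rev := by
      rw [← det_permute', det_of_isUpperTriangular htri]; rfl
    _ = _ := by rw [hε]

section BetaOne

variable {n u v : ℕ} (α : ℝ)

lemma Aent_one_of_add_le (h : u + v ≤ n - 1) :
    Aent n α 1 u v = ((n - 1 - v).choose u : ℝ) * α ^ u * (1 - α) ^ (n - 1 - u - v) := by
  rw [Aent, min_eq_left (by omega), sum_eq_single_of_mem v (mem_Icc.mpr ⟨by omega, le_rfl⟩)]
  · rw [Nat.add_sub_cancel_left, Nat.choose_self, Nat.sub_self]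
    simp
  · intro i hi hne
    have hiv : 0 < v - i := by have := (mem_Icc.mp hi).2; omega
    simp [zero_pow hiv.ne']

lemma Aent_one_of_lt_add (hu : u < n) (h : n - 1 < u + v) : Aent n α 1 u v = 0 := by
  refine sum_eq_zero fun i hi => ?_
  have hiv : 0 < v - i := by have := (mem_Icc.mp hi).2; omega
  simp [zero_pow hiv.ne']

lemma Aent_one (hu : u < n) :
    Aent n α 1 u v =
      if u + v ≤ n - 1 then ((n - 1 - v).choose u : ℝ) * α ^ u * (1 - α) ^ (n - 1 - u - v)
      else 0 := by
  split_ifs with h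
  · exact Aent_one_of_add_le α h
  · exact Aent_one_of_lt_add α hu (by omega)

lemma Aent_one_antidiagonal (hu : u < n) : Aent n α 1 u (n - 1 - u) = α ^ u := by
  rw [Aent_one_of_add_le α (by omega), Nat.sub_sub_self (by omega), Nat.choose_self,
    show n - 1 - u - (n - 1 - u) = 0 by omega]
  simp

end BetaOne

theorem Amat_beta_one_general (n : ℕ) (α : ℝ) :
    (∀ u v : Fin n, Amat n α 1 u v =
      if (u : ℕ) + (v : ℕ) ≤ n - 1 then
        ((n - 1 - (v : ℕ)).choose (u : ℕ) : ℝ) * α ^ (u : ℕ) *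
          (1 - α) ^ (n - 1 - (u : ℕ) - (v : ℕ))
      else 0) ∧
    (Amat n α 1).det = (-α) ^ (n * (n - 1) / 2) := by
  refine ⟨fun u v => Aent_one α u.isLt, ?_⟩
  have hbelow : ∀ u v : Fin n, u.rev < v → Amat n α 1 u v = 0 := fun u v h =>
    Aent_one_of_lt_add α u.isLt (by rw [Fin.lt_def, Fin.val_rev] at h; omega)
  have hanti : ∀ u : Fin n, Amat n α 1 u u.rev = α ^ (u : ℕ) := fun u => by
    rw [Amat, show (u.rev : ℕ) = n - 1 - u by rw [Fin.val_rev]; omega]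
    exact Aent_one_antidiagonal α u.isLt
  rw [det_of_eq_zero_below_antidiagonal _ hbelow, neg_pow α, prod_congr rfl fun u _ => hanti u,
    prod_pow_eq_pow_sum, Fin.sum_univ_eq_sum_range (fun i => i), sum_range_id]

theorem Amat_beta_one (n : ℕ) (hn : 1 ≤ n) (α : ℝ) (hα : α ∈ Set.Ioo (0 : ℝ) 1) :
    (∀ u v : Fin n, Amat n α 1 u v =
      if (u : ℕ) + (v : ℕ) ≤ n - 1 then
        ((n - 1 - (v : ℕ)).choose (u : ℕ) : ℝ) * α ^ (u : ℕ) *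
          (1 - α) ^ (n - 1 - (u : ℕ) - (v : ℕ))
      else 0) ∧
    (Amat n α 1).det = (-α) ^ (n * (n - 1) / 2) :=
  Amat_beta_one_general n α
end

section
/- Let B = A(n, α, β)^T with entries a^n_{ij}. Define the transformed matrix with entries: row 1 scaled as a^n_{1j} (1-α-β)^{n-1}/(1-α)^{n-1}; row 2 as (a^n_{2j} - a^n_{21} a^n_{1j}/a^n_{11})(1-α)/(1-α-β); and rows i = 3,…,n as (a^n_{ij} - (β/(1-α)) a^n_{i-1,j})(1-α)/(1-α-β). Then the transformed matrix has block form with (1,1)-entry (1-α-β)^{n-1}, zeros below it in the first column, and lower-right (n-1)×(n-1) block equal to A(n-1, α, β)^T. -/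
open Finset

/-- The row-transformation of `A(n,α,β)ᵀ` from the inductive determinant proof. -/
noncomputable def transf (n : ℕ) (α β : ℝ) : Matrix (Fin n) (Fin n) ℝ :=
  fun i j =>
    let B := (Amat n α β).transpose
    if (i : ℕ) = 0 then B i j * (1 - α - β) ^ (n - 1) / (1 - α) ^ (n - 1)
    else if (i : ℕ) = 1 then
      (B i j - B i ⟨0, i.pos⟩ * B ⟨0, i.pos⟩ j / B ⟨0, i.pos⟩ ⟨0, i.pos⟩) *
        (1 - α) / (1 - α - β)
    else
      (B i j - β / (1 - α) *
          B ⟨(i : ℕ) - 1, lt_of_le_of_lt (Nat.sub_le _ _) i.isLt⟩ j) *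
        (1 - α) / (1 - α - β)

/-!
Column `v` of `A(n, α, β)` is the coefficient list of
`P_v = (β + (1 - β) X) ^ v * (1 - α + α X) ^ (n - 1 - v)`: each of the `v` true links survives
with probability `1 - β`, each of the `n - 1 - v` absent ones is added with probability `α`.
Consecutive columns share the factor `(β + (1 - β) X) ^ v * (1 - α + α X) ^ (n - 2 - v)`, the
polynomial of column `v` of `A(n - 1, α, β)`, and
`(1 - α) (β + (1 - β) X) - β (1 - α + α X) = (1 - α - β) X`.
Hence `(1 - α) A_{u, v+1} - β A_{u, v}` vanishes for `u = 0` and equals `(1 - α - β)` times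
the `(u - 1, v)` entry of `A(n - 1, α, β)` otherwise. Every row operation defining `transf` is
such a combination, the second one because `A_{0,1} / A_{0,0} = β / (1 - α)`.
-/

open Polynomial

theorem coeff_C_add_C_mul_X_pow {R : Type*} [CommSemiring R] (a b : R) (n k : ℕ) :
    ((C a + C b * X) ^ n).coeff k = n.choose k * b ^ k * a ^ (n - k) := by
  have hterm : ∀ i, (C b * X) ^ i * C a ^ (n - i) * (n.choose i : R[X]) =
      C (n.choose i * b ^ i * a ^ (n - i)) * X ^ i := by
    intro i; simp only [mul_pow, C_mul, C_pow, C_eq_natCast]; ring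
  simp_rw [add_comm (C a), add_pow, hterm, finsetSum_coeff, coeff_C_mul_X_pow,
    Finset.sum_ite_eq, Finset.mem_range]
  split_ifs with hk
  · rfl
  · simp [Nat.choose_eq_zero_of_lt (not_lt.mp hk)]

noncomputable def observedDegreePoly (m : ℕ) (α β : ℝ) (v : ℕ) : ℝ[X] :=
  (C β + C (1 - β) * X) ^ v * (C (1 - α) + C α * X) ^ (m - v)

theorem Aent_eq_coeff {n v : ℕ} (hv : v < n) (α β : ℝ) (u : ℕ) :
    Aent n α β u v = (observedDegreePoly (n - 1) α β v).coeff u := by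
  rw [observedDegreePoly, coeff_mul, Aent]
  simp_rw [coeff_C_add_C_mul_X_pow]
  set f := fun i : ℕ => (v.choose i : ℝ) * (1 - β) ^ (v - i) * β ^ i *
      ((n - 1 - v).choose (i + u - v) : ℝ) * α ^ (i + u - v) * (1 - α) ^ (n - 1 - u - i)
  set g := fun p : ℕ × ℕ => (v.choose p.1 : ℝ) * (1 - β) ^ p.1 * β ^ (v - p.1) *
      ((n - 1 - v).choose p.2 * α ^ p.2 * (1 - α) ^ (n - 1 - v - p.2))
  -- `i` counts the deleted links: `v - i` links survive and `i + u - v` are added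
  have hval : ∀ i ∈ Finset.Icc (v - u) (min v (n - 1 - u)), f i = g (v - i, i + u - v) := by
    intro i hi
    simp only [Finset.mem_Icc, le_min_iff] at hi
    simp only [f, g, Nat.choose_symm_of_eq_add (by omega : v = (v - i) + i),
      show v - (v - i) = i by omega, show n - 1 - v - (i + u - v) = n - 1 - u - i by omega]
    ring
  refine Finset.sum_bij_ne_zero (fun i _ _ => (v - i, i + u - v)) ?_ ?_ ?_
    (fun i hi _ => hval i hi)
  · intro i hi _
    simp only [Finset.mem_Icc, le_min_iff] at hi
    rw [Finset.HasAntidiagonal.mem_antidiagonal]; omega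
  · intro i hi _ j hj _ h
    simp only [Finset.mem_Icc, le_min_iff] at hi hj
    simp only [Prod.mk.injEq] at h; omega
  · rintro ⟨k, l⟩ hkl hne
    rw [Finset.HasAntidiagonal.mem_antidiagonal] at hkl
    have hk : k ≤ v := by
      by_contra h; apply hne; simp [Nat.choose_eq_zero_of_lt (not_le.mp h)]
    have hl : l ≤ n - 1 - v := by
      by_contra h; apply hne; simp [Nat.choose_eq_zero_of_lt (not_le.mp h)]
    have hmem : v - k ∈ Finset.Icc (v - u) (min v (n - 1 - u)) := by
      simp only [Finset.mem_Icc, le_min_iff]; omega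
    have hpair : (v - (v - k), v - k + u - v) = (k, l) := by
      simp only [Prod.mk.injEq]; omega
    refine ⟨v - k, hmem, ?_, hpair⟩
    change f (v - k) ≠ 0
    rw [hval _ hmem, hpair]
    exact hne

theorem observedDegreePoly_recurrence {m v : ℕ} (hv : v < m) (α β : ℝ) :
    C (1 - α) * observedDegreePoly m α β (v + 1) - C β * observedDegreePoly m α β v =
      C (1 - α - β) * X * observedDegreePoly (m - 1) α β v := by
  simp only [observedDegreePoly, show m - v = (m - 1 - v) + 1 by omega,
    show m - (v + 1) = m - 1 - v by omega, pow_succ, C_sub, C_1]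
  ring

theorem Aent_zero_zero (n : ℕ) (α β : ℝ) : Aent n α β 0 0 = (1 - α) ^ (n - 1) := by
  simp [Aent]

theorem Aent_recurrence_zero {n v : ℕ} (hv : v + 1 < n) (α β : ℝ) :
    (1 - α) * Aent n α β 0 (v + 1) - β * Aent n α β 0 v = 0 := by
  have h := congrArg (coeff · 0) (observedDegreePoly_recurrence (by omega : v < n - 1) α β)
  simp only [coeff_sub, coeff_C_mul, mul_assoc, coeff_X_mul_zero, mul_zero] at h
  rwa [Aent_eq_coeff hv, Aent_eq_coeff (by omega : v < n)]

theorem Aent_recurrence_succ {n v : ℕ} (hv : v + 1 < n) (α β : ℝ) (u : ℕ) :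
    (1 - α) * Aent n α β (u + 1) (v + 1) - β * Aent n α β (u + 1) v =
      (1 - α - β) * Aent (n - 1) α β u v := by
  have h := congrArg (coeff · (u + 1))
    (observedDegreePoly_recurrence (by omega : v < n - 1) α β)
  simp only [coeff_sub, coeff_C_mul, mul_assoc, coeff_X_mul] at h
  rwa [Aent_eq_coeff hv, Aent_eq_coeff (by omega : v < n), Aent_eq_coeff (by omega : v < n - 1)]

theorem transf_apply_of_ne_zero {n : ℕ} {α β : ℝ} (hα : α ≠ 1) (hab : α + β ≠ 1)
    (i j : Fin n) (hi : (i : ℕ) ≠ 0) :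
    transf n α β i j = ((1 - α) * Aent n α β j i - β * Aent n α β j (i - 1)) / (1 - α - β) := by
  have hα' : 1 - α ≠ 0 := sub_ne_zero.mpr hα.symm
  have hab' : 1 - α - β ≠ 0 := by contrapose! hab; linarith
  simp only [transf, Matrix.transpose_apply, Amat, if_neg hi]
  split_ifs with h1
  · have h01 : (1 - α) * Aent n α β 0 1 = β * Aent n α β 0 0 := by
      linear_combination Aent_recurrence_zero (n := n) (v := 0) (by omega) α β
    have h00 : Aent n α β 0 0 ≠ 0 := by rw [Aent_zero_zero]; exact pow_ne_zero _ hα'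
    rw [h1]
    field_simp
    linear_combination -Aent n α β j 0 * h01
  · field_simp

theorem transf_block_form (n : ℕ) (hn : 2 ≤ n) (α β : ℝ)
    (hα : α ∈ Set.Ioo (0 : ℝ) 1) (hab : α + β ≠ 1) :
    transf n α β ⟨0, by omega⟩ ⟨0, by omega⟩ = (1 - α - β) ^ (n - 1) ∧
    (∀ i : Fin n, (i : ℕ) ≠ 0 → transf n α β i ⟨0, by omega⟩ = 0) ∧
    (∀ i j : Fin (n - 1),
      transf n α β ⟨(i : ℕ) + 1, by have := i.isLt; omega⟩
          ⟨(j : ℕ) + 1, by have := j.isLt; omega⟩ =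
        (Amat (n - 1) α β).transpose i j) := by
  have hα1 : α ≠ 1 := hα.2.ne
  have hab' : 1 - α - β ≠ 0 := by contrapose! hab; linarith
  refine ⟨?_, ?_, ?_⟩
  · simp only [transf, Matrix.transpose_apply, Amat, if_pos, Aent_zero_zero]
    exact mul_div_cancel_left₀ _ (pow_ne_zero _ (sub_ne_zero.mpr hα1.symm))
  · intro i hi
    obtain ⟨k, hk⟩ : ∃ k, (i : ℕ) = k + 1 := Nat.exists_eq_succ_of_ne_zero hi
    rw [transf_apply_of_ne_zero hα1 hab i _ hi, hk, Nat.add_sub_cancel,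
      Aent_recurrence_zero (by omega), zero_div]
  · intro i j
    rw [transf_apply_of_ne_zero hα1 hab _ _ (Nat.succ_ne_zero _), Nat.add_sub_cancel,
      Aent_recurrence_succ (by omega), mul_div_cancel_left₀ _ hab']
    rfl
end

section
/- The determinant of A(n, α, β)^T satisfies the recursion det A(n,α,β)^T = (1-α-β)^{n-1} · det A(n-1,α,β)^T for all n ≥ 2 and α, β ∈ (0,1) with α + β ≠ 1. -/
open Finset

/-!
Row `v` of `A(m + 1, α, β)ᵀ` lists the coefficients of `g ^ v * h ^ (m - v)` with
`g = (1 - β) X + β` and `h = α X + (1 - α)`. Since `g - h = (1 - α - β) (X - 1)`, subtracting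
from each row the previous one makes every row but the first `(1 - α - β) (X - 1)` times a row
of `A(m, α, β)ᵀ`; cumulative column sums then cancel the factor `X - 1`, and turn the last
column into `(h(1) ^ m, 0, …, 0) = (1, 0, …, 0)`, so a cofactor expansion along it leaves
`(1 - α - β) ^ m` times the smaller determinant.
-/

open Polynomial

section PowCoeffMatrix

variable {R : Type*} [CommRing R]

theorem coeff_C_mul_X_add_C_pow (a b : R) (m k : ℕ) :
    ((C a * X + C b) ^ m).coeff k = m.choose k * a ^ k * b ^ (m - k) := by
  have hterm (i : ℕ) : (C a * X) ^ i * C b ^ (m - i) * (m.choose i : R[X]) =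
      C (m.choose i * a ^ i * b ^ (m - i)) * X ^ i := by
    simp only [C_mul, C_pow, ← C_eq_natCast]; ring
  simp only [add_pow, hterm, finsetSum_coeff, coeff_C_mul_X_pow, sum_ite_eq,
    mem_range, ite_eq_left_iff, not_lt]
  intro hmk
  simp [Nat.choose_eq_zero_of_lt (Nat.lt_of_succ_le hmk)]

theorem coeff_X_sub_one_mul_succ (r : R[X]) (k : ℕ) :
    ((X - 1) * r).coeff (k + 1) = r.coeff k - r.coeff (k + 1) := by
  rw [sub_mul, one_mul, coeff_sub, coeff_X_mul]

theorem sum_range_coeff_eq_eval_one {r : R[X]} {n : ℕ} (hr : r.natDegree < n) :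
    ∑ j ∈ range n, r.coeff j = r.eval 1 := by
  simp [eval_eq_sum_range' hr]

theorem natDegree_pow_mul_pow_le {p q : R[X]} (hp : p.natDegree ≤ 1) (hq : q.natDegree ≤ 1)
    (v w : ℕ) : (p ^ v * q ^ w).natDegree ≤ v + w :=
  natDegree_mul_le_of_le (by simpa using natDegree_pow_le_of_le v hp)
    (by simpa using natDegree_pow_le_of_le w hq)

noncomputable def powCoeffMatrix (p q : R[X]) (m : ℕ) : Matrix (Fin (m + 1)) (Fin (m + 1)) R :=
  Matrix.of fun v u => (p ^ (v : ℕ) * q ^ (m - v)).coeff u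

noncomputable def powCoeffMatrixRowDiff (p q : R[X]) (c : R) (m : ℕ) :
    Matrix (Fin (m + 2)) (Fin (m + 2)) R :=
  Matrix.of <| Fin.cases (fun u => (q ^ (m + 1)).coeff u)
    fun v u => c * ((X - 1) * (p ^ (v : ℕ) * q ^ (m - v))).coeff u

noncomputable def powCoeffMatrixReduced (p q : R[X]) (c : R) (m : ℕ) :
    Matrix (Fin (m + 2)) (Fin (m + 2)) R :=
  Matrix.of <| Fin.cases (fun u => ∑ j ∈ range (u + 1), (q ^ (m + 1)).coeff j)
    fun v u => -(c * (p ^ (v : ℕ) * q ^ (m - v)).coeff u)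

variable {p q : R[X]} {c : R}

theorem det_powCoeffMatrix_succ_eq_det_rowDiff (hpq : p - q = C c * (X - 1)) (m : ℕ) :
    (powCoeffMatrix p q (m + 1)).det = (powCoeffMatrixRowDiff p q c m).det := by
  refine Matrix.det_eq_of_forall_row_eq_smul_add_pred (fun _ => 1) (fun u => ?_) fun v u => ?_
  · simp [powCoeffMatrix, powCoeffMatrixRowDiff]
  · have hv : m + 1 - v = m - v + 1 := by omega
    have hdiff : p ^ ((v : ℕ) + 1) * q ^ (m - v) =
        C c * ((X - 1) * (p ^ (v : ℕ) * q ^ (m - v))) + p ^ (v : ℕ) * q ^ (m - v + 1) := by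
      linear_combination (p ^ (v : ℕ) * q ^ (m - v)) * hpq
    simp only [powCoeffMatrix, powCoeffMatrixRowDiff, Matrix.of_apply, Fin.cases_succ,
      Fin.val_succ, Fin.val_castSucc, Nat.add_sub_add_right, hv, hdiff, coeff_add, coeff_C_mul,
      one_mul]

theorem det_rowDiff_eq_det_reduced (m : ℕ) :
    (powCoeffMatrixRowDiff p q c m).det = (powCoeffMatrixReduced p q c m).det := by
  refine (Matrix.det_eq_of_forall_col_eq_smul_add_pred (fun _ => 1) (fun v => ?_)
    fun v u => ?_).symm
  · cases v using Fin.cases <;>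
      simp [powCoeffMatrixRowDiff, powCoeffMatrixReduced]
  · cases v using Fin.cases
    · simp only [powCoeffMatrixReduced, powCoeffMatrixRowDiff, Matrix.of_apply, Fin.cases_zero,
        Fin.val_succ, Fin.val_castSucc, sum_range_succ _ ((u : ℕ) + 1), one_mul]
      ring
    · simp only [powCoeffMatrixReduced, powCoeffMatrixRowDiff, Matrix.of_apply, Fin.cases_succ,
        Fin.val_succ, Fin.val_castSucc, coeff_X_sub_one_mul_succ, mul_neg, one_mul]
      ring

theorem det_powCoeffMatrixReduced (hp : p.natDegree ≤ 1) (hq : q.natDegree ≤ 1) (m : ℕ) :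
    (powCoeffMatrixReduced p q c m).det =
      (c * q.eval 1) ^ (m + 1) * (powCoeffMatrix p q m).det := by
  have hcorner : powCoeffMatrixReduced p q c m 0 (Fin.last (m + 1)) = q.eval 1 ^ (m + 1) := by
    rw [← eval_pow, ← sum_range_coeff_eq_eval_one]
    · rfl
    · simpa using natDegree_pow_mul_pow_le hp hq 0 (m + 1)
  have hlast (v : Fin (m + 1)) :
      powCoeffMatrixReduced p q c m v.succ (Fin.last (m + 1)) = 0 := by
    have hdeg := natDegree_pow_mul_pow_le hp hq v (m - v)
    simp only [powCoeffMatrixReduced, Matrix.of_apply, Fin.cases_succ, Fin.val_last,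
      coeff_eq_zero_of_natDegree_lt (show _ < m + 1 from hdeg.trans_lt (by omega)), mul_zero,
      neg_zero]
  have hminor : (powCoeffMatrixReduced p q c m).submatrix Fin.succ (Fin.last (m + 1)).succAbove =
      -c • powCoeffMatrix p q m := by
    ext v u
    simp [powCoeffMatrixReduced, powCoeffMatrix]
  have hsign : (-1 : R) ^ (m + 1) * (-c) ^ (m + 1) = c ^ (m + 1) := by
    rw [← mul_pow, neg_one_mul, neg_neg]
  rw [Matrix.det_succ_column _ (Fin.last (m + 1)), Fin.sum_univ_succ]
  simp only [hlast, mul_zero, zero_mul, sum_const_zero, add_zero, Fin.succAbove_zero,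
    hminor, hcorner, Matrix.det_smul, Fintype.card_fin, Fin.val_zero, Fin.val_last, zero_add]
  linear_combination (q.eval 1 ^ (m + 1) * (powCoeffMatrix p q m).det) * hsign

theorem det_powCoeffMatrix_succ (hp : p.natDegree ≤ 1) (hq : q.natDegree ≤ 1)
    (hpq : p - q = C c * (X - 1)) (m : ℕ) :
    (powCoeffMatrix p q (m + 1)).det = (c * q.eval 1) ^ (m + 1) * (powCoeffMatrix p q m).det := by
  rw [det_powCoeffMatrix_succ_eq_det_rowDiff hpq, det_rowDiff_eq_det_reduced,
    det_powCoeffMatrixReduced hp hq]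

end PowCoeffMatrix

theorem Aent_succ_eq_coeff (α β : ℝ) {m u v : ℕ} (hu : u ≤ m) (hv : v ≤ m) :
    Aent (m + 1) α β u v =
      ((C (1 - β) * X + C β) ^ v * (C α * X + C (1 - α)) ^ (m - v)).coeff u := by
  simp only [Aent, Nat.add_sub_cancel, coeff_mul, coeff_C_mul_X_add_C_pow]
  refine sum_of_injOn (fun i => (v - i, i + u - v)) ?_ ?_ ?_ ?_
  · intro i hi j hj hij
    simp only [coe_Icc, Set.mem_Icc, le_min_iff, Prod.mk.injEq] at hi hj hij
    omega
  · intro i hi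
    simp only [coe_Icc, Set.mem_Icc, le_min_iff, mem_coe, HasAntidiagonal.mem_antidiagonal]
      at hi ⊢
    omega
  · rintro ⟨k, l⟩ hkl hnot
    rw [HasAntidiagonal.mem_antidiagonal] at hkl
    have : v < k ∨ m - v < l := by
      by_contra! h
      exact hnot ⟨v - k, by simp only [coe_Icc, Set.mem_Icc, le_min_iff]; omega,
        by simp only [Prod.mk.injEq]; omega⟩
    rcases this with h | h <;> simp [Nat.choose_eq_zero_of_lt h]
  · intro i hi
    simp only [mem_Icc, le_min_iff] at hi
    rw [← Nat.choose_symm (show i ≤ v by omega), Nat.sub_sub_self (show i ≤ v by omega),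
      show m - v - (i + u - v) = m - u - i by omega]
    ring

theorem transpose_Amat_succ (α β : ℝ) (m : ℕ) :
    (Amat (m + 1) α β).transpose =
      powCoeffMatrix (C (1 - β) * X + C β) (C α * X + C (1 - α)) m := by
  ext v u
  exact Aent_succ_eq_coeff α β (Nat.lt_succ_iff.mp u.isLt) (Nat.lt_succ_iff.mp v.isLt)

theorem det_transpose_recursion_general (n : ℕ) (α β : ℝ) :
    ((Amat n α β).transpose).det =
      (1 - α - β) ^ (n - 1) * ((Amat (n - 1) α β).transpose).det := by
  rcases n with _ | _ | m
  · simp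
  · simp [transpose_Amat_succ, powCoeffMatrix]
  · have hpq : C (1 - β) * X + C β - (C α * X + C (1 - α)) = C (1 - α - β) * (X - 1) := by
      simp only [map_sub, map_one]; ring
    rw [Nat.add_sub_cancel, transpose_Amat_succ, transpose_Amat_succ,
      det_powCoeffMatrix_succ natDegree_linear_le natDegree_linear_le hpq]
    simp

theorem det_transpose_recursion (n : ℕ) (hn : 2 ≤ n) (α β : ℝ)
    (hα : α ∈ Set.Ioo (0 : ℝ) 1) (hβ : β ∈ Set.Ioo (0 : ℝ) 1) (hab : α + β ≠ 1) :
    ((Amat n α β).transpose).det =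
      (1 - α - β) ^ (n - 1) * ((Amat (n - 1) α β).transpose).det :=
  det_transpose_recursion_general n α β
end
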